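/- Let τ, α, ν > 0 and let b_n = (B(α,ν+τ)/B(α,ν)) · (α)_n (τ)_n / ((α+ν+τ)_n · n!) for n = 0, 1, 2, … be the Schoenberg coefficients of the F-family. Then there exists a constant M > 0 (depending on α, τ, ν) such that n^{1+ν} · b_n → M as n → ∞; that is, b_n ∼ M n^{-(1+ν)}. -/

import Mathlib

/-!
Euler's limit formula `Γ(x) = lim n^x n! / (x (x+1) ⋯ (x+n))` says that
`(x)_n ∼ n! n^(x-1) / Γ(x)`. Inserting this for the three Pochhammer symbols in `b_n`, the powers
of `n` combine to `n^(α - 1 + τ - 1 - (α + ν + τ - 1)) = n^(-(1 + ν))` and the factorials cancel,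
so `n^(1+ν) b_n` tends to `M = B(α,ν+τ)/B(α,ν) · Γ(α+ν+τ)/(Γ(α) Γ(τ)) > 0`.
-/

open Real Filter

/-- Euler Beta function `B(a,b) = Γ(a)Γ(b)/Γ(a+b)`. -/
noncomputable def betaFn (a b : ℝ) : ℝ := Real.Gamma a * Real.Gamma b / Real.Gamma (a + b)

/-- Pochhammer symbol (rising factorial) `(x)_n = x(x+1)⋯(x+n-1)`. -/
noncomputable def poch (x : ℝ) (n : ℕ) : ℝ := Polynomial.eval x (ascPochhammer ℝ n)

/-- Schoenberg coefficients of the `F`-family. -/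
noncomputable def schoenbergCoeff (τ α ν : ℝ) (n : ℕ) : ℝ :=
  (betaFn α (ν + τ) / betaFn α ν) *
    (poch α n * poch τ n / (poch (α + ν + τ) n * n.factorial))

open Topology

lemma betaFn_pos {a b : ℝ} (ha : 0 < a) (hb : 0 < b) : 0 < betaFn a b := by
  have := Gamma_pos_of_pos ha
  have := Gamma_pos_of_pos hb
  have := Gamma_pos_of_pos (add_pos ha hb)
  unfold betaFn
  positivity

lemma poch_eq_prod_range (x : ℝ) (n : ℕ) : poch x n = ∏ i ∈ Finset.range n, (x + i) := by
  induction n with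
  | zero => simp [poch]
  | succ n ih => rw [poch, ascPochhammer_succ_eval, ← poch, ih, Finset.prod_range_succ]

lemma poch_ne_zero {x : ℝ} (hx : ∀ m : ℕ, x ≠ -m) (n : ℕ) : poch x n ≠ 0 := by
  rw [poch_eq_prod_range, Finset.prod_ne_zero_iff]
  intro i _ h
  exact hx i (eq_neg_of_add_eq_zero_left h)

lemma GammaSeq_eq_poch (x : ℝ) (n : ℕ) :
    GammaSeq x n = (n : ℝ) ^ x * n.factorial / (poch x n * (x + n)) := by
  rw [GammaSeq, Finset.prod_range_succ, poch_eq_prod_range]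

lemma poch_div_rpow_mul_factorial_eq {x : ℝ} (hx : ∀ m : ℕ, x ≠ -m) {n : ℕ} (hn : n ≠ 0) :
    poch x n / ((n : ℝ) ^ (x - 1) * n.factorial) = n / (n + x) / GammaSeq x n := by
  have hn' : (n : ℝ) ≠ 0 := Nat.cast_ne_zero.2 hn
  have hxn : (n : ℝ) + x ≠ 0 := fun h => hx n (eq_neg_of_add_eq_zero_right h)
  have := poch_ne_zero hx n
  have := (rpow_pos_of_pos (Nat.cast_pos.2 (Nat.pos_of_ne_zero hn)) x).ne'
  have : (n.factorial : ℝ) ≠ 0 := Nat.cast_ne_zero.2 n.factorial_ne_zero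
  rw [GammaSeq_eq_poch, rpow_sub_one hn']
  field_simp
  ring

lemma tendsto_poch_div_rpow_mul_factorial {x : ℝ} (hx : ∀ m : ℕ, x ≠ -m) :
    Tendsto (fun n : ℕ => poch x n / ((n : ℝ) ^ (x - 1) * n.factorial)) atTop
      (𝓝 (Gamma x)⁻¹) := by
  rw [← one_div]
  refine ((tendsto_natCast_div_add_atTop x).div (GammaSeq_tendsto_Gamma x)
    (Gamma_ne_zero hx)).congr' ?_
  filter_upwards [eventually_ne_atTop 0] with n hn
  exact (poch_div_rpow_mul_factorial_eq hx hn).symm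

lemma rpow_mul_schoenbergCoeff_eq (τ α ν : ℝ) {n : ℕ} (hn : n ≠ 0) :
    (n : ℝ) ^ (1 + ν) * schoenbergCoeff τ α ν n =
      betaFn α (ν + τ) / betaFn α ν *
        (poch α n / ((n : ℝ) ^ (α - 1) * n.factorial) *
          (poch τ n / ((n : ℝ) ^ (τ - 1) * n.factorial)) /
          (poch (α + ν + τ) n / ((n : ℝ) ^ (α + ν + τ - 1) * n.factorial))) := by
  have hn' : (0 : ℝ) < n := Nat.cast_pos.2 (Nat.pos_of_ne_zero hn)
  have hpow : (n : ℝ) ^ (1 + ν) =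
      (n : ℝ) ^ (α + ν + τ - 1) / ((n : ℝ) ^ (α - 1) * (n : ℝ) ^ (τ - 1)) := by
    rw [← rpow_add hn', ← rpow_sub hn']
    ring_nf
  have := (rpow_pos_of_pos hn' (α - 1)).ne'
  have := (rpow_pos_of_pos hn' (τ - 1)).ne'
  have : (n.factorial : ℝ) ≠ 0 := Nat.cast_ne_zero.2 n.factorial_ne_zero
  rw [schoenbergCoeff, hpow]
  field_simp

/-- The Schoenberg coefficients of the `F`-family satisfy `b_n ∼ M n^{-(1+ν)}` as `n → ∞`
for some positive constant `M` depending on `α, τ, ν`. -/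
theorem schoenbergCoeff_asymptotics (τ α ν : ℝ) (hτ : 0 < τ) (hα : 0 < α) (hν : 0 < ν) :
    ∃ M : ℝ, 0 < M ∧
      Filter.Tendsto (fun n : ℕ => (n : ℝ) ^ (1 + ν) * schoenbergCoeff τ α ν n)
        Filter.atTop (nhds M) := by
  have not_neg_nat {x : ℝ} (hx : 0 < x) (m : ℕ) : x ≠ -m :=
    ((neg_nonpos.2 m.cast_nonneg).trans_lt hx).ne'
  have hs : 0 < α + ν + τ := by positivity
  refine ⟨betaFn α (ν + τ) / betaFn α ν *
      ((Gamma α)⁻¹ * (Gamma τ)⁻¹ / (Gamma (α + ν + τ))⁻¹), ?_, ?_⟩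
  · have := betaFn_pos hα (add_pos hν hτ)
    have := betaFn_pos hα hν
    positivity
  refine (tendsto_const_nhds.mul (((tendsto_poch_div_rpow_mul_factorial (not_neg_nat hα)).mul
    (tendsto_poch_div_rpow_mul_factorial (not_neg_nat hτ))).div
    (tendsto_poch_div_rpow_mul_factorial (not_neg_nat hs))
    (inv_ne_zero (Gamma_pos_of_pos hs).ne'))).congr' ?_
  filter_upwards [eventually_ne_atTop 0] with n hn
  exact (rpow_mul_schoenbergCoeff_eq τ α ν hn).symm
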